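/- Fix integers 0 < n₁ ≤ n₂ ≤ … ≤ n_m and a composition d̄ = (d₁,…,d_m) ∈ Z_{≥0}^m. Suppose μ^{(0)} = (0), μ^{(j)} ∈ Ser^{n_j}_{d_j, μ^{(j−1)}} for j = 1,…,m (each μ^{(j−1)} extended by trailing zeros to length n_j), and μ^{(m)}₊ = (d₁,…,d_m)₊. Then μ^{(i)}₊ = (d₁,…,d_i)₊ for every 1 ≤ i ≤ m. -/
import Mathlib


/-- A composition of length `nn` is encoded as a function `ℕ → ℕ` vanishing from
index `nn` on (0-based indexing).  `IsSerpentine nn d lam mu` says that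
`mu ∈ Ser^nn_{d,lam}` is a `d`-serpentine associated with `lam`. -/
def IsSerpentine (nn d : ℕ) (lam mu : ℕ → ℕ) : Prop :=
  (∀ i, nn ≤ i → lam i = 0) ∧
  (∀ i, nn ≤ i → mu i = 0) ∧
  (∀ i, lam i ≤ mu i) ∧
  (∑ i ∈ Finset.range nn, (mu i - lam i)) = d ∧
  (∀ i j, i < j → j < nn → lam i ≤ lam j → mu i ≤ lam j) ∧
  (∀ i j, i < j → j < nn → lam j < lam i → lam i ≤ mu j → mu i = lam i)

/-- `domSum f s` is the sum of the `s` largest entries of a (finitely supported)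
function `f : ℕ → ℕ`, i.e. the `s`-th partial sum of the dominant part `f₊`. -/
noncomputable def domSum (f : ℕ → ℕ) (s : ℕ) : ℕ :=
  sSup ((fun T : Finset ℕ => ∑ i ∈ T, f i) '' {T : Finset ℕ | T.card ≤ s})

/-- `f₊ = g₊`: the dominant parts (non-increasing reorderings, padded by trailing
zeros) of the finitely supported functions `f` and `g` coincide. -/
def DomEq (f g : ℕ → ℕ) : Prop := ∀ s, domSum f s = domSum g s

/-- `f₊ ≤ g₊` in the dominance order: `|f| = |g|` and every partial sum of the
dominant part of `g` is at least the corresponding one for `f`. -/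
def DomLE (f g : ℕ → ℕ) : Prop :=
  (∀ s, domSum f s ≤ domSum g s) ∧ ∃ N, ∀ s, N ≤ s → domSum f s = domSum g s

/-- The composition `(λ, d)`: append the entry `d` to a length-`n` composition. -/
def appendComp (n : ℕ) (lam : ℕ → ℕ) (d : ℕ) : ℕ → ℕ :=
  fun i => if i < n then lam i else if i = n then d else 0

/-- The composition `(d₁, …, d_m)`: truncate `d` to its first `m` entries. -/
def truncComp (m : ℕ) (d : ℕ → ℕ) : ℕ → ℕ := fun i => if i < m then d i else 0

/-- A chain of iterated serpentines `μ⁽⁰⁾ = (0)`, `μ⁽ʲ⁾ ∈ Ser^{n_j}_{d_j, μ⁽ʲ⁻¹⁾}`. -/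
def SerpChain (n : ℕ → ℕ) (m : ℕ) (d : ℕ → ℕ) (μ : ℕ → ℕ → ℕ) : Prop :=
  (∀ i, μ 0 i = 0) ∧ ∀ j, j < m → IsSerpentine (n j) (d j) (μ j) (μ (j + 1))

/-- `d̄ ∈ Z_{≥0}^m` is `n̄`-admissible: for each `s < m` the number of nonzero
entries among `d_0, …, d_s` is at most `n_s`. -/
def NAdmissible (n : ℕ → ℕ) (m : ℕ) (d : ℕ → ℕ) : Prop :=
  ∀ s, s < m → ((Finset.range (s + 1)).filter (fun j => d j ≠ 0)).card ≤ n s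

namespace SerpAux

lemma sum_inter_range {f : ℕ → ℕ} {N : ℕ} (hf : ∀ i, N ≤ i → f i = 0) (T : Finset ℕ) :
    ∑ i ∈ T, f i = ∑ i ∈ T ∩ Finset.range N, f i := by
  refine (Finset.sum_subset Finset.inter_subset_left ?_).symm
  intro x hx hx'
  apply hf
  by_contra h
  exact hx' (Finset.mem_inter.2 ⟨hx, Finset.mem_range.2 (Nat.lt_of_not_le h)⟩)

lemma bddAbove_domSet {f : ℕ → ℕ} {N : ℕ} (hf : ∀ i, N ≤ i → f i = 0) (s : ℕ) :
    BddAbove ((fun T : Finset ℕ => ∑ i ∈ T, f i) '' {T : Finset ℕ | T.card ≤ s}) := by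
  refine ⟨∑ i ∈ Finset.range N, f i, ?_⟩
  rintro x ⟨T, _, rfl⟩
  exact le_trans (le_of_eq (sum_inter_range hf T))
    (Finset.sum_le_sum_of_subset Finset.inter_subset_right)

lemma nonempty_domSet (f : ℕ → ℕ) (s : ℕ) :
    ((fun T : Finset ℕ => ∑ i ∈ T, f i) '' {T : Finset ℕ | T.card ≤ s}).Nonempty :=
  ⟨0, ⟨∅, by simp, by simp⟩⟩

lemma le_domSum {f : ℕ → ℕ} {N : ℕ} (hf : ∀ i, N ≤ i → f i = 0) {s : ℕ}
    {T : Finset ℕ} (hT : T.card ≤ s) : ∑ i ∈ T, f i ≤ domSum f s :=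
  le_csSup (bddAbove_domSet hf s) ⟨T, hT, rfl⟩

lemma domSum_le {f : ℕ → ℕ} {s B : ℕ}
    (h : ∀ T : Finset ℕ, T.card ≤ s → ∑ i ∈ T, f i ≤ B) : domSum f s ≤ B := by
  refine csSup_le (nonempty_domSet f s) ?_
  rintro x ⟨T, hT, rfl⟩
  exact h T hT

lemma domSum_zero (f : ℕ → ℕ) : domSum f 0 = 0 := by
  refine le_antisymm (domSum_le ?_) (Nat.zero_le _)
  intro T hT
  rw [Finset.card_eq_zero.1 (Nat.le_zero.1 hT)]
  simp

lemma exists_achiever {f : ℕ → ℕ} {N : ℕ} (hf : ∀ i, N ≤ i → f i = 0) (s : ℕ) :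
    ∃ T : Finset ℕ, T ⊆ Finset.range N ∧ T.card ≤ s ∧ ∑ i ∈ T, f i = domSum f s := by
  have hmem := Nat.sSup_mem (nonempty_domSet f s) (bddAbove_domSet hf s)
  obtain ⟨T, hT, hsum⟩ := hmem
  refine ⟨T ∩ Finset.range N, Finset.inter_subset_right, ?_, ?_⟩
  · exact le_trans (Finset.card_le_card Finset.inter_subset_left) hT
  · rw [← sum_inter_range hf]; exact hsum

lemma domSum_mono_fun {f g : ℕ → ℕ} {N : ℕ} (hf : ∀ i, N ≤ i → f i = 0)
    (hg : ∀ i, N ≤ i → g i = 0) (hfg : ∀ i, f i ≤ g i) (s : ℕ) :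
    domSum f s ≤ domSum g s := by
  refine domSum_le fun T hT => ?_
  exact le_trans (Finset.sum_le_sum fun i _ => hfg i) (le_domSum hg hT)

lemma domSum_mono_s {f : ℕ → ℕ} {N : ℕ} (hf : ∀ i, N ≤ i → f i = 0) {s t : ℕ}
    (h : s ≤ t) : domSum f s ≤ domSum f t := by
  refine domSum_le fun T hT => le_domSum hf (le_trans hT h)

lemma domSum_stable {f : ℕ → ℕ} {N : ℕ} (hf : ∀ i, N ≤ i → f i = 0) {s : ℕ}
    (h : N ≤ s) : domSum f s = ∑ i ∈ Finset.range N, f i := by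
  refine le_antisymm (domSum_le fun T hT => ?_) ?_
  · exact le_trans (le_of_eq (sum_inter_range hf T))
      (Finset.sum_le_sum_of_subset Finset.inter_subset_right)
  · exact le_domSum hf (le_trans (le_of_eq (Finset.card_range N)) h)

/-- updating a zero entry of `f` to `c`. -/
lemma domSum_update {f : ℕ → ℕ} {N : ℕ} (hf : ∀ i, N ≤ i → f i = 0) {p : ℕ}
    (hp : f p = 0) (c s : ℕ) :
    domSum (fun i => if i = p then c else f i) (s + 1)
      = max (domSum f (s + 1)) (domSum f s + c) := by
  set g : ℕ → ℕ := fun i => if i = p then c else f i with hg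
  have hgsupp : ∀ i, max N (p + 1) ≤ i → g i = 0 := by
    intro i hi
    simp only [hg]
    rw [if_neg, hf i (le_trans (le_max_left _ _) hi)]
    omega
  have hfsupp : ∀ i, max N (p + 1) ≤ i → f i = 0 :=
    fun i hi => hf i (le_trans (le_max_left _ _) hi)
  refine le_antisymm ?_ ?_
  · refine domSum_le fun T hT => ?_
    by_cases hpT : p ∈ T
    · refine le_trans ?_ (le_max_right _ _)
      have h1 : ∑ i ∈ T, g i = c + ∑ i ∈ T.erase p, f i := by
        rw [← Finset.add_sum_erase _ g hpT]
        congr 1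
        · simp only [hg, if_pos rfl]
        · refine Finset.sum_congr rfl fun i hi => ?_
          simp only [hg]; rw [if_neg (Finset.ne_of_mem_erase hi)]
      have h2 : (T.erase p).card ≤ s := by
        have h3 := Finset.card_erase_of_mem hpT; omega
      have h4 := le_domSum hfsupp (s := s) h2
      omega
    · refine le_trans ?_ (le_max_left _ _)
      have he : ∑ i ∈ T, g i = ∑ i ∈ T, f i := by
        refine Finset.sum_congr rfl fun i hi => ?_
        simp only [hg]
        rw [if_neg]
        rintro rfl; exact hpT hi
      rw [he]
      exact le_domSum hfsupp hT
  · refine max_le ?_ ?_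
    · refine le_trans ?_ (domSum_mono_fun hfsupp hgsupp ?_ (s+1))
      · exact le_refl _
      · intro i
        simp only [hg]
        split
        · rename_i h; subst h; rw [hp]; exact Nat.zero_le _
        · exact le_refl _
    · obtain ⟨T, hTsub, hTcard, hTsum⟩ := exists_achiever hfsupp s
      have hsum : ∑ i ∈ insert p (T.erase p), g i = ∑ i ∈ T.erase p, f i + c := by
        rw [Finset.sum_insert (Finset.notMem_erase p T)]
        have : ∑ i ∈ T.erase p, g i = ∑ i ∈ T.erase p, f i := by
          refine Finset.sum_congr rfl fun i hi => ?_
          simp only [hg]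
          rw [if_neg (Finset.ne_of_mem_erase hi)]
        rw [this]
        simp only [hg, if_pos rfl]
        omega
      have hcard : (insert p (T.erase p)).card ≤ s + 1 := by
        refine le_trans (Finset.card_insert_le _ _) ?_
        have := Finset.card_erase_le (a := p) (s := T)
        omega
      have hTe : ∑ i ∈ T.erase p, f i + c ≥ ∑ i ∈ T, f i + c := by
        have : ∑ i ∈ T, f i = ∑ i ∈ T.erase p, f i := by
          by_cases hpT : p ∈ T
          · rw [← Finset.add_sum_erase _ _ hpT, hp, zero_add]
          · rw [Finset.erase_eq_of_notMem hpT]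
        omega
      calc domSum f s + c = ∑ i ∈ T, f i + c := by rw [hTsum]
        _ ≤ ∑ i ∈ T.erase p, f i + c := hTe
        _ = ∑ i ∈ insert p (T.erase p), g i := hsum.symm
        _ ≤ domSum g (s + 1) := le_domSum hgsupp hcard

lemma domSum_concave {f : ℕ → ℕ} {N : ℕ} (hf : ∀ i, N ≤ i → f i = 0) (s : ℕ) :
    domSum f (s + 2) + domSum f s ≤ 2 * domSum f (s + 1) := by
  obtain ⟨T, _, hTc, hTs⟩ := exists_achiever hf (s + 2)
  obtain ⟨T', _, hTc', hTs'⟩ := exists_achiever hf s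
  by_cases hc : T.card ≤ s + 1
  · have h1 : domSum f (s + 2) ≤ domSum f (s + 1) := by
      rw [← hTs]; exact le_domSum hf hc
    have h2 : domSum f s ≤ domSum f (s + 1) := domSum_mono_s hf (by omega)
    omega
  · have hTcard : T.card = s + 2 := by omega
    have hTne : T.Nonempty := by rw [← Finset.card_pos]; omega
    obtain ⟨t, htT, htmin⟩ := Finset.exists_min_image T f hTne
    have h1 : domSum f (s + 2) ≤ domSum f (s + 1) + f t := by
      rw [← hTs, ← Finset.add_sum_erase _ _ htT]
      have hec : (T.erase t).card ≤ s + 1 := by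
        rw [Finset.card_erase_of_mem htT]; omega
      have := le_domSum hf hec
      omega
    have h2 : domSum f s + f t ≤ domSum f (s + 1) := by
      obtain ⟨u, huT, huT'⟩ : ∃ u ∈ T, u ∉ T' := by
        by_contra h
        push_neg at h
        have := Finset.card_le_card h
        omega
      have hins : (insert u T').card ≤ s + 1 :=
        le_trans (Finset.card_insert_le _ _) (by omega)
      have hsum : ∑ i ∈ insert u T', f i = f u + domSum f s := by
        rw [Finset.sum_insert huT', hTs']
      have hfu : f t ≤ f u := htmin u huT
      have := le_domSum hf hins
      omega
    omega

/-- among increased positions of a serpentine, the one with ≺-maximal λ-value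
dominates the total increment over any subset. -/
lemma serp_claimD {nn d : ℕ} {lam mu : ℕ → ℕ} (h : IsSerpentine nn d lam mu) :
    ∀ Q : Finset ℕ, Q ⊆ Finset.range nn → (∀ q ∈ Q, lam q < mu q) → Q.Nonempty →
      ∃ r ∈ Q, ∑ q ∈ Q, (mu q - lam q) ≤ mu r := by
  obtain ⟨hl, hm, hle, hsum, hiii, hiv⟩ := h
  have pair : ∀ q r, q ∈ Finset.range nn → r ∈ Finset.range nn →
      lam q < mu q → lam r < mu r → q ≠ r →
      (lam q * nn + q ≤ lam r * nn + r) → mu q ≤ lam r := by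
    intro q r hq hr hq' hr' hne hkey
    rw [Finset.mem_range] at hq hr
    rcases lt_or_gt_of_ne hne with hlt | hgt
    · have : lam q ≤ lam r := by nlinarith [hq, hr]
      exact hiii q r hlt hr this
    · have hll : lam q < lam r := by
        rcases Nat.lt_or_ge (lam q) (lam r) with h' | h'
        · exact h'
        · exfalso; nlinarith
      by_contra hcon
      push_neg at hcon
      have := hiv r q hgt hq hll (le_of_lt hcon)
      omega
  intro Q
  induction Q using Finset.strongInduction with
  | _ Q ih =>
    intro hQsub hQinc hQne
    obtain ⟨r, hrQ, hrmax⟩ := Finset.exists_max_image Q (fun q => lam q * nn + q) hQne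
    refine ⟨r, hrQ, ?_⟩
    by_cases hQ' : (Q.erase r).Nonempty
    · obtain ⟨r', hr'Q', hr'⟩ := ih (Q.erase r) (Finset.erase_ssubset hrQ)
        (fun x hx => hQsub (Finset.mem_of_mem_erase hx))
        (fun q hq => hQinc q (Finset.mem_of_mem_erase hq)) hQ'
      have hr'Q : r' ∈ Q := Finset.mem_of_mem_erase hr'Q'
      have hkey : lam r' * nn + r' ≤ lam r * nn + r := hrmax r' hr'Q
      have hne : r' ≠ r := Finset.ne_of_mem_erase hr'Q'
      have hmu : mu r' ≤ lam r :=
        pair r' r (hQsub hr'Q) (hQsub hrQ) (hQinc r' hr'Q) (hQinc r hrQ) hne hkey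
      rw [← Finset.add_sum_erase _ _ hrQ]
      have hler' := hle r'
      have hler := hle r
      omega
    · have : Q = {r} := by
        apply Finset.eq_singleton_iff_unique_mem.2
        refine ⟨hrQ, fun x hx => ?_⟩
        by_contra hne
        exact hQ' ⟨x, Finset.mem_erase.2 ⟨hne, hx⟩⟩
      rw [this, Finset.sum_singleton]
      omega

/-- the strip inequality. -/
lemma serp_strip {nn d : ℕ} {lam mu : ℕ → ℕ} (h : IsSerpentine nn d lam mu) (s : ℕ) :
    domSum lam s + d ≤ domSum mu (s + 1) := by
  obtain ⟨hl, hm, hle, hsum, hiii, hiv⟩ := h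
  obtain ⟨T, hTsub, hTcard, hTsum⟩ := exists_achiever hl s
  set Q : Finset ℕ := (Finset.range nn).filter (fun q => lam q < mu q ∧ q ∉ T) with hQdef
  have hdisj : Disjoint T Q := by
    rw [Finset.disjoint_right]
    intro a ha
    rw [hQdef, Finset.mem_filter] at ha
    exact ha.2.2
  have hcover : ∑ i ∈ T ∪ Q, (mu i - lam i) = d := by
    rw [← hsum]
    refine Finset.sum_subset ?_ ?_
    · intro x hx
      rcases Finset.mem_union.1 hx with h' | h'
      · exact hTsub h'
      · rw [hQdef, Finset.mem_filter] at h'; exact h'.1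
    · intro x hx hx'
      have hxT : x ∉ T := fun hc => hx' (Finset.mem_union_left _ hc)
      have : ¬ lam x < mu x := by
        intro hc
        exact hx' (Finset.mem_union_right _ (by
          rw [hQdef, Finset.mem_filter]; exact ⟨hx, hc, hxT⟩))
      omega
  have hsplit : ∑ i ∈ T, (mu i - lam i) + ∑ i ∈ Q, (mu i - lam i) = d := by
    rw [← Finset.sum_union hdisj]; exact hcover
  have hTmu : ∑ i ∈ T, mu i = ∑ i ∈ T, lam i + ∑ i ∈ T, (mu i - lam i) := by
    rw [← Finset.sum_add_distrib]
    exact Finset.sum_congr rfl fun i _ => by have := hle i; omega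
  by_cases hQne : Q.Nonempty
  · obtain ⟨r, hrQ, hr⟩ := serp_claimD ⟨hl, hm, hle, hsum, hiii, hiv⟩ Q
      (Finset.filter_subset _ _)
      (fun q hq => by rw [hQdef, Finset.mem_filter] at hq; exact hq.2.1) hQne
    have hrT : r ∉ T := by
      rw [hQdef, Finset.mem_filter] at hrQ; exact hrQ.2.2
    have hins : (insert r T).card ≤ s + 1 :=
      le_trans (Finset.card_insert_le _ _) (by omega)
    have hsumins : ∑ i ∈ insert r T, mu i = mu r + ∑ i ∈ T, mu i :=
      Finset.sum_insert hrT
    have hfin := le_domSum hm hins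
    rw [hsumins, hTmu, hTsum] at hfin
    omega
  · have hQ0 : ∑ i ∈ Q, (mu i - lam i) = 0 := by
      rw [Finset.not_nonempty_iff_eq_empty.1 hQne]; simp
    have hfin := le_domSum hm (show T.card ≤ s + 1 by omega)
    rw [hTmu, hTsum] at hfin
    omega

/-- pointwise monotonicity part. -/
lemma serp_mono {nn d : ℕ} {lam mu : ℕ → ℕ} (h : IsSerpentine nn d lam mu) (s : ℕ) :
    domSum lam s ≤ domSum mu s := by
  obtain ⟨hl, hm, hle, _, _, _⟩ := h
  obtain ⟨T, _, hTcard, hTsum⟩ := exists_achiever hl s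
  rw [← hTsum]
  exact le_trans (Finset.sum_le_sum fun i _ => hle i) (le_domSum hm hTcard)

lemma serp_total {nn d : ℕ} {lam mu : ℕ → ℕ} (h : IsSerpentine nn d lam mu) :
    ∑ i ∈ Finset.range nn, mu i = ∑ i ∈ Finset.range nn, lam i + d := by
  obtain ⟨_, _, hle, hsum, _, _⟩ := h
  rw [← hsum, ← Finset.sum_add_distrib]
  exact Finset.sum_congr rfl fun i _ => by have := hle i; omega

lemma trunc_supp (j : ℕ) (d : ℕ → ℕ) : ∀ i, j ≤ i → truncComp j d i = 0 := by
  intro i hi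
  simp only [truncComp]
  rw [if_neg]
  omega

lemma trunc_succ_eq (j : ℕ) (d : ℕ → ℕ) :
    truncComp (j+1) d = fun i => if i = j then d j else truncComp j d i := by
  funext i
  by_cases h : i = j
  · subst h; simp [truncComp]
  · by_cases h2 : i < j
    · simp [truncComp, h, h2, Nat.lt_succ_of_lt h2]
    · have h3 : ¬ i < j + 1 := by omega
      simp [truncComp, h, h2, h3]

lemma domSum_trunc_succ (j : ℕ) (d : ℕ → ℕ) (s : ℕ) :
    domSum (truncComp (j+1) d) (s+1)
      = max (domSum (truncComp j d) (s+1)) (domSum (truncComp j d) s + d j) := by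
  rw [trunc_succ_eq]
  exact domSum_update (trunc_supp j d) (by simp [truncComp]) (d j) s

lemma domSum_trunc_stable (j : ℕ) (d : ℕ → ℕ) {s : ℕ} (h : j ≤ s) :
    domSum (truncComp j d) s = ∑ i ∈ Finset.range j, d i := by
  rw [domSum_stable (trunc_supp j d) h]
  refine Finset.sum_congr rfl fun i hi => ?_
  simp [truncComp, Finset.mem_range.1 hi]

lemma down_step {x y : ℕ → ℕ} {dd N : ℕ}
    (hxy : ∀ s, y s ≤ x s)
    (hx0 : x 0 = 0) (hy0 : y 0 = 0)
    (hle : ∀ s, max (x (s+1)) (x s + dd) ≤ max (y (s+1)) (y s + dd))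
    (hconc : ∀ s, y (s+2) + y s ≤ 2 * y (s+1))
    (hstab : ∀ s, N ≤ s → x s = y s) :
    ∀ s, x s = y s := by
  have claim : ∀ t s, N ≤ s + t → x s = y s := by
    intro t
    induction t with
    | zero => intro s hs; exact hstab s (by omega)
    | succ t ih =>
      intro s hs
      have hnext : x (s + 1) = y (s + 1) := ih (s + 1) (by omega)
      by_contra h
      have hxs : y s < x s := lt_of_le_of_ne (hxy s) (Ne.symm h)
      rcases Nat.eq_zero_or_pos s with hs0 | hspos
      · subst hs0; omega
      obtain ⟨u, rfl⟩ : ∃ u, s = u + 1 := ⟨s - 1, by omega⟩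
      have h1 : x (u+1) + dd ≤ max (y (u+2)) (y (u+1) + dd) :=
        le_trans (le_max_right _ _) (hle (u+1))
      have hstep : y (u+1) + dd + 1 ≤ y (u + 2) := by
        rcases max_cases (y (u+2)) (y (u+1) + dd) with ⟨hM, _⟩ | ⟨hM, _⟩ <;> omega
      have hcu : y (u + 2) + y u ≤ 2 * y (u + 1) := hconc u
      have h2 : x (u + 1) ≤ max (x (u+1)) (x u + dd) := le_max_left _ _
      have h3 := hle u
      rcases max_cases (y (u+1)) (y u + dd) with ⟨hM, _⟩ | ⟨hM, _⟩ <;> omega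
  intro s
  exact claim N s (by omega)

end SerpAux

/-- Corollary 1.9.  If a chain of iterated serpentines satisfies
`μ⁽ᵐ⁾₊ = (d₁,…,d_m)₊`, then `μ⁽ʲ⁾₊ = (d₁,…,d_j)₊` for every `j ≤ m`. -/
theorem chain_dominant_part_equalities (m : ℕ) (hm : 0 < m)
    (n : ℕ → ℕ) (hn0 : 0 < n 0)
    (hmono : ∀ j k, j ≤ k → k < m → n j ≤ n k)
    (d : ℕ → ℕ) (μ : ℕ → ℕ → ℕ)
    (hchain : SerpChain n m d μ)
    (hfin : DomEq (μ m) (truncComp m d)) :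
    ∀ j, j ≤ m → DomEq (μ j) (truncComp j d) := by
  open SerpAux in
  classical
  set Nμ : ℕ → ℕ := fun j => if j = 0 then 0 else n (j - 1) with hNμ
  have hsupp : ∀ j, j ≤ m → ∀ i, Nμ j ≤ i → μ j i = 0 := by
    intro j hj i hi
    match j with
    | 0 => exact hchain.1 i
    | (k+1) =>
      have := (hchain.2 k (by omega)).2.1
      apply this
      simpa [hNμ] using hi
  have hNle : ∀ j, j < m → Nμ j ≤ n j := by
    intro j hj
    match j with
    | 0 => simp [hNμ]
    | (k+1) =>
      simp only [hNμ]
      simpa using hmono k (k+1) (by omega) hj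
  have htot : ∀ j, j ≤ m → ∑ i ∈ Finset.range (Nμ j), μ j i = ∑ i ∈ Finset.range j, d i := by
    intro j
    induction j with
    | zero => intro _; simp [hNμ]
    | succ j ih =>
      intro hj
      have hS := hchain.2 j (by omega)
      have h1 : ∑ i ∈ Finset.range (n j), μ (j+1) i
          = ∑ i ∈ Finset.range (n j), μ j i + d j := serp_total hS
      have h2 : ∑ i ∈ Finset.range (n j), μ j i = ∑ i ∈ Finset.range (Nμ j), μ j i := by
        refine (Finset.sum_subset ?_ ?_).symm
        · exact Finset.range_subset_range.2 (hNle j (by omega))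
        · intro x hx hx'
          refine hsupp j (by omega) x ?_
          rw [Finset.mem_range] at hx
          by_contra hc
          exact hx' (Finset.mem_range.2 (by omega))
      have h3 : Nμ (j+1) = n j := by simp [hNμ]
      rw [h3, h1, h2, ih (by omega), Finset.sum_range_succ]
  have claimB : ∀ j, j ≤ m → ∀ s, domSum (truncComp j d) s ≤ domSum (μ j) s := by
    intro j
    induction j with
    | zero =>
      intro _ s
      have : domSum (truncComp 0 d) s = 0 := by
        refine le_antisymm (domSum_le fun T hT => ?_) (Nat.zero_le _)
        have : ∀ i ∈ T, truncComp 0 d i = 0 := fun i _ => trunc_supp 0 d i (Nat.zero_le i)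
        rw [Finset.sum_congr rfl this]
        simp
      rw [this]
      exact Nat.zero_le _
    | succ j ih =>
      intro hj s
      have hS := hchain.2 j (by omega)
      match s with
      | 0 => rw [domSum_zero, domSum_zero]
      | (s+1) =>
        rw [domSum_trunc_succ]
        refine max_le ?_ ?_
        · exact le_trans (ih (by omega) (s+1)) (serp_mono hS (s+1))
        · refine le_trans ?_ (serp_strip hS s)
          have := ih (by omega) s
          omega
  have hdesc : ∀ t j, j + t = m → DomEq (μ j) (truncComp j d) := by
    intro t
    induction t with
    | zero =>
      intro j hj
      have : j = m := by omega
      rw [this]; exact hfin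
    | succ t ih =>
      intro j hj
      have hjm : j < m := by omega
      have hnext : DomEq (μ (j+1)) (truncComp (j+1) d) := ih (j+1) (by omega)
      have hS := hchain.2 j hjm
      refine down_step (x := fun s => domSum (μ j) s) (y := fun s => domSum (truncComp j d) s)
        (dd := d j) (N := max (Nμ j) j) (claimB j (le_of_lt hjm))
        (domSum_zero _) (domSum_zero _) ?_ ?_ ?_
      · intro s
        have e1 : max (domSum (truncComp j d) (s+1)) (domSum (truncComp j d) s + d j)
            = domSum (μ (j+1)) (s+1) := by
          rw [← domSum_trunc_succ, hnext (s+1)]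
        show max (domSum (μ j) (s+1)) (domSum (μ j) s + d j)
          ≤ max (domSum (truncComp j d) (s+1)) (domSum (truncComp j d) s + d j)
        rw [e1]
        exact max_le (serp_mono hS (s+1)) (serp_strip hS s)
      · intro s
        exact domSum_concave (trunc_supp j d) s
      · intro s hs
        show domSum (μ j) s = domSum (truncComp j d) s
        rw [domSum_stable (hsupp j (le_of_lt hjm)) (le_trans (le_max_left _ _) hs),
          htot j (le_of_lt hjm), domSum_trunc_stable j d (le_trans (le_max_right _ _) hs)]
  intro j hj
  exact hdesc (m - j) j (by omega)
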